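/- Let G be a vertex-transitive and vertex-primitive group of automorphisms of a connectivity-one digraph Γ whose lobes all have at least three vertices, and let Λ be a lobe of Γ. Then the setwise stabiliser G_{Λ} acts primitively and not regularly on the vertices of Λ. -/

import Mathlib

open Pointwise

section DigraphBasics

variable {V : Type*}

/-- Adjacency in a digraph given by its arc relation. -/
def DigraphAdj (A : V → V → Prop) (u v : V) : Prop := A u v ∨ A v u

/-- The subdigraph induced on the set `S` is connected. -/
def ConnOn (A : V → V → Prop) (S : Set V) : Prop :=
  ∀ u ∈ S, ∀ v ∈ S,
    Relation.ReflTransGen (fun x y => DigraphAdj A x y ∧ x ∈ S ∧ y ∈ S) u v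

/-- A vertex whose removal disconnects the digraph. -/
def IsCutVertex (A : V → V → Prop) (v : V) : Prop := ¬ ConnOn A {v}ᶜ

/-- A digraph has connectivity one if it is connected and the removal of some
single vertex disconnects it. -/
def ConnectivityOne (A : V → V → Prop) : Prop :=
  ConnOn A Set.univ ∧ ∃ v : V, IsCutVertex A v

/-- The set `S` induces a subdigraph of connectivity strictly greater than one:
it is connected, has at least two vertices, and no single vertex disconnects it. -/
def TwoConnOn (A : V → V → Prop) (S : Set V) : Prop :=
  S.Nontrivial ∧ ConnOn A S ∧ ∀ w ∈ S, ConnOn A (S \ {w})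

/-- A lobe of a digraph: a maximal set of vertices inducing a connected subdigraph
of connectivity strictly greater than one. -/
def IsLobe (A : V → V → Prop) (Λ : Set V) : Prop :=
  TwoConnOn A Λ ∧ ∀ Λ' : Set V, TwoConnOn A Λ' → Λ ⊆ Λ' → Λ' = Λ

/-- `r` restricts to an equivalence relation on `S`. -/
def IsEquivRelOn (S : Set V) (r : V → V → Prop) : Prop :=
  (∀ u ∈ S, r u u) ∧ (∀ u ∈ S, ∀ v ∈ S, r u v → r v u) ∧
  (∀ u ∈ S, ∀ v ∈ S, ∀ w ∈ S, r u v → r v w → r u w)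

/-- The subgroup `H` acts transitively on the set `S`. -/
def TransitiveOn {G : Type*} [Group G] [MulAction G V] (H : Subgroup G) (S : Set V) : Prop :=
  ∀ u ∈ S, ∀ v ∈ S, ∃ h ∈ H, h • u = v

/-- The subgroup `H` acts primitively on the set `S`: transitively, and every
`H`-invariant equivalence relation on `S` is trivial or universal. -/
def PrimitiveOn {G : Type*} [Group G] [MulAction G V] (H : Subgroup G) (S : Set V) : Prop :=
  TransitiveOn H S ∧
  ∀ r : V → V → Prop, IsEquivRelOn S r →
    (∀ h ∈ H, ∀ u ∈ S, ∀ v ∈ S, r u v → r (h • u) (h • v)) →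
    (∀ u ∈ S, ∀ v ∈ S, r u v → u = v) ∨ (∀ u ∈ S, ∀ v ∈ S, r u v)

/-- The subgroup `H` acts regularly on the set `S`: transitively, with
point stabilisers acting trivially on `S`. -/
def RegularOn {G : Type*} [Group G] [MulAction G V] (H : Subgroup G) (S : Set V) : Prop :=
  TransitiveOn H S ∧ ∀ h ∈ H, ∀ v ∈ S, h • v = v → ∀ w ∈ S, h • w = w

end DigraphBasics

/-!
Every vertex `x` enters a lobe `Λ` through a unique vertex, its gate (two entry points would
give an ear of `Λ`, against maximality), and the gate map is constant on every other lobe.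
By primitivity of `G`, a `G`-invariant relation generated inside translates of `Λ` is trivial
or universal, and the gate map pushes the universal case down to `Λ`. This shows that all lobes
are translates of `Λ`, that `G_Λ` is transitive on `Λ` (here three points of `Λ` are needed) and
that it is primitive on `Λ`.

If `G_Λ` were also regular on `Λ`, its image `G_Λ^Λ` would be cyclic, hence abelian. Then a pair
of points `x, y` of a lobe `g⁻¹ • Λ` gets a well defined, `G`-invariant label in `G_Λ^Λ`, the
element carrying `g • x` to `g • y`. Labels multiply along each lobe, and since lobes are arranged
like a tree (again by the gates), every closed walk through lobes has trivial label product.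
Being joined by a walk of trivial product is then a `G`-invariant equivalence relation. It
separates distinct points `u, v` of `Λ`, but relates `u` to a point `w ≠ u` of a second lobe
through `v`, contradicting primitivity of `G`.
-/

open Relation List

section Connectivity

variable {V : Type*} {A : V → V → Prop}

theorem List.getLastD_append (x : V) (l₁ l₂ : List V) :
    (l₁ ++ l₂).getLastD x = l₂.getLastD (l₁.getLastD x) := by
  simp [getLast?_append]

theorem List.IsChain.cons_append {R : V → V → Prop} {x : V} {l₁ l₂ : List V}
    (h₁ : IsChain R (x :: l₁)) (h₂ : IsChain R (l₁.getLastD x :: l₂)) :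
    IsChain R (x :: (l₁ ++ l₂)) := by
  rcases l₂ with _ | ⟨y, l₂⟩
  · simpa using h₁
  obtain ⟨hy, h₂⟩ := isChain_cons_cons.1 h₂
  exact h₁.append h₂ (by simpa [getLast?_cons] using hy)

theorem exists_nodup_isChain_of_reflTransGen {r : V → V → Prop} (hr : ∀ x y, r x y → r y x)
    {a b : V} (hab : a ≠ b) (h : ReflTransGen r a b) :
    ∃ I, IsChain r (a :: I ++ [b]) ∧ (a :: I ++ [b]).Nodup := by
  classical
  have hreach : (SimpleGraph.fromRel r).Reachable a b := by
    clear hab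
    induction h with
    | refl => rfl
    | @tail c d _ hcd ih =>
      by_cases hcd' : c = d
      · exact hcd' ▸ ih
      · exact ih.trans ((SimpleGraph.fromRel_adj r c d).2 ⟨hcd', .inl hcd⟩).reachable
  obtain ⟨p⟩ := hreach
  obtain ⟨q, hq⟩ := p.toPath
  cases q with
  | nil => exact absurd rfl hab
  | @cons _ c _ hadj q =>
    have hsupp : a :: q.support.dropLast ++ [b] = (SimpleGraph.Walk.cons hadj q).support := by
      have := dropLast_append_getLast q.support_ne_nil
      rw [q.getLast_support] at this
      rw [SimpleGraph.Walk.support_cons, cons_append, this]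
    refine ⟨q.support.dropLast, ?_, hsupp ▸ hq.support_nodup⟩
    rw [hsupp]
    exact (SimpleGraph.Walk.isChain_adj_support _).imp fun x y h => h.2.elim id (hr _ _)

/-- `ConnOn A S` unfolds to reachability for this relation. -/
def AdjWithin (A : V → V → Prop) (S : Set V) (x y : V) : Prop :=
  DigraphAdj A x y ∧ x ∈ S ∧ y ∈ S

variable {S T : Set V} {x y : V}

theorem AdjWithin.symm (h : AdjWithin A S x y) : AdjWithin A S y x := ⟨h.1.symm, h.2.2, h.2.1⟩

theorem Relation.ReflTransGen.adjWithin_symm (h : ReflTransGen (AdjWithin A S) x y) :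
    ReflTransGen (AdjWithin A S) y x :=
  have : Std.Symm (AdjWithin A S) := ⟨fun _ _ h => h.symm⟩
  ReflTransGen.stdSymm.symm _ _ h

theorem Relation.ReflTransGen.adjWithin_mono (hST : S ⊆ T) (h : ReflTransGen (AdjWithin A S) x y) :
    ReflTransGen (AdjWithin A T) x y :=
  ReflTransGen.mono (fun _ _ h => ⟨h.1, hST h.2.1, hST h.2.2⟩) _ _ h

theorem ConnOn.of_forall_reflTransGen {α : V} (h : ∀ u ∈ S, ReflTransGen (AdjWithin A S) u α) :
    ConnOn A S :=
  fun u hu v hv => (h u hu).trans (h v hv).adjWithin_symm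

theorem TwoConnOn.connOn_diff (h : TwoConnOn A S) (w : V) : ConnOn A (S \ {w}) := by
  by_cases hw : w ∈ S
  · exact h.2.2 w hw
  · rw [Set.sdiff_singleton_eq_self hw]; exact h.2.1

theorem reflTransGen_adjWithin_of_isChain {l : List V} (hl : IsChain (DigraphAdj A) l)
    (hT : ∀ z ∈ l, z ∈ T) (hx : x ∈ l) (hy : y ∈ l) : ReflTransGen (AdjWithin A T) x y := by
  have hl' : IsChain (AdjWithin A T) l :=
    hl.imp_of_mem_imp fun a b ha hb hab => ⟨hab, hT a ha, hT b hb⟩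
  have hne : l ≠ [] := ne_nil_of_mem hx
  have hhead : ∀ z ∈ l, ReflTransGen (AdjWithin A T) (l.head hne) z :=
    hl'.induction _ _ (fun _ _ h₁ h₂ => h₂.tail h₁) fun _ => .refl
  exact (hhead x hx).adjWithin_symm.trans (hhead y hy)

theorem ConnOn.of_forall_exists_reflTransGen {C : Set V} (hC : ConnOn A C) (hCS : C ⊆ S)
    (h : ∀ u ∈ S, ∃ c ∈ C, ReflTransGen (AdjWithin A S) u c) : ConnOn A S := by
  intro u hu v hv
  obtain ⟨c, hc, huc⟩ := h u hu
  obtain ⟨d, hd, hvd⟩ := h v hv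
  exact huc.trans (((hC c hc d hd).adjWithin_mono hCS).trans hvd.adjWithin_symm)

/-- A vertex `z` occurs at most once on a path, so it misses the part before `u` or the part
after `u`. -/
theorem List.exists_infix_mem_notMem_of_nodup {w w' u z : V} {I : List V}
    (hnodup : (w :: I ++ [w']).Nodup) (hu : u ∈ I) (huz : u ≠ z) :
    ∃ l, l <:+: w :: I ++ [w'] ∧ u ∈ l ∧ z ∉ l ∧ (w ∈ l ∨ w' ∈ l) := by
  obtain ⟨I₁, I₂, rfl⟩ := List.append_of_mem hu
  have hsplit : w :: (I₁ ++ u :: I₂) ++ [w'] = (w :: I₁) ++ u :: (I₂ ++ [w']) := by simp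
  by_cases hz : z ∈ w :: I₁
  · refine ⟨u :: (I₂ ++ [w']), ⟨w :: I₁, [], by simp⟩, mem_cons_self,
      fun h => (nodup_append.1 (hsplit ▸ hnodup)).2.2 z hz z h rfl, .inr (by simp)⟩
  · exact ⟨w :: I₁ ++ [u], ⟨[], I₂ ++ [w'], by simp⟩, by simp, by simpa [Ne.symm huz] using hz,
      .inl mem_cons_self⟩

theorem TwoConnOn.union_ear (hS : TwoConnOn A S) {w w' : V} {I : List V} (hw : w ∈ S)
    (hw' : w' ∈ S) (hchain : IsChain (DigraphAdj A) (w :: I ++ [w']))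
    (hnodup : (w :: I ++ [w']).Nodup) : TwoConnOn A (S ∪ {z | z ∈ I}) := by
  have hmem : ∀ z ∈ w :: I ++ [w'], z ∈ S ∪ {z | z ∈ I} := by
    intro z hz
    simp only [cons_append, mem_cons, mem_append, not_mem_nil, or_false] at hz
    rcases hz with rfl | hz | rfl
    exacts [.inl hw, .inr hz, .inl hw']
  refine ⟨hS.1.mono Set.subset_union_left, ?_, fun z _ => ?_⟩
  · refine ConnOn.of_forall_exists_reflTransGen hS.2.1 Set.subset_union_left fun u hu => ?_
    rcases hu with hu | hu
    · exact ⟨u, hu, .refl⟩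
    · exact ⟨w, hw, reflTransGen_adjWithin_of_isChain hchain hmem (by simp [show u ∈ I from hu])
        (by simp)⟩
  refine ConnOn.of_forall_exists_reflTransGen (hS.connOn_diff z)
    (Set.sdiff_subset_sdiff_left Set.subset_union_left) fun u ⟨hu, huz⟩ => ?_
  rcases hu with hu | hu
  · exact ⟨u, ⟨hu, huz⟩, .refl⟩
  obtain ⟨l, hl, hul, hzl, hwl⟩ := List.exists_infix_mem_notMem_of_nodup hnodup hu huz
  have hpath : ∀ c ∈ l, ReflTransGen (AdjWithin A ((S ∪ {z | z ∈ I}) \ {z})) u c :=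
    fun c hc => reflTransGen_adjWithin_of_isChain (hchain.infix hl)
      (fun d hd => ⟨hmem d (hl.subset hd), fun h => hzl (h ▸ hd)⟩) hul hc
  rcases hwl with hwl | hwl
  · exact ⟨w, ⟨hw, fun h => hzl (h ▸ hwl)⟩, hpath w hwl⟩
  · exact ⟨w', ⟨hw', fun h => hzl (h ▸ hwl)⟩, hpath w' hwl⟩

end Connectivity

section Lobes

variable {V : Type*} {A : V → V → Prop} {S T : Set V}

theorem ConnOn.of_subsingleton (h : S.Subsingleton) : ConnOn A S :=
  fun _ hu _ hv => h hu hv ▸ .refl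

theorem twoConnOn_pair {x y : V} (hxy : x ≠ y) (hadj : DigraphAdj A x y) :
    TwoConnOn A {x, y} := by
  refine ⟨⟨x, by simp, y, by simp, hxy⟩, ConnOn.of_forall_reflTransGen (α := x) ?_, fun w _ => ?_⟩
  · rintro u (rfl | rfl)
    exacts [.refl, .single ⟨hadj.symm, by simp, by simp⟩]
  · refine ConnOn.of_subsingleton fun u hu v hv => ?_
    simp only [Set.mem_sdiff, Set.mem_insert_iff, Set.mem_singleton_iff] at hu hv
    grind

theorem TwoConnOn.union (hS : TwoConnOn A S) (hT : TwoConnOn A T) {a b : V} (hab : a ≠ b)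
    (ha : a ∈ S ∩ T) (hb : b ∈ S ∩ T) : TwoConnOn A (S ∪ T) := by
  refine ⟨hS.1.mono Set.subset_union_left, ConnOn.of_forall_reflTransGen (α := a) ?_, ?_⟩
  · rintro u (hu | hu)
    · exact (hS.2.1 u hu a ha.1).adjWithin_mono Set.subset_union_left
    · exact (hT.2.1 u hu a ha.2).adjWithin_mono Set.subset_union_right
  intro z _
  obtain ⟨c, hc, hcz⟩ : ∃ c ∈ S ∩ T, c ≠ z := by
    by_cases haz : a = z
    · exact ⟨b, hb, fun h => hab (haz.trans h.symm)⟩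
    · exact ⟨a, ha, haz⟩
  refine ConnOn.of_forall_reflTransGen (α := c) fun u ⟨hu, huz⟩ => ?_
  rcases hu with hu | hu
  · exact (hS.connOn_diff z u ⟨hu, huz⟩ c ⟨hc.1, hcz⟩).adjWithin_mono
      (Set.sdiff_subset_sdiff_left Set.subset_union_left)
  · exact (hT.connOn_diff z u ⟨hu, huz⟩ c ⟨hc.2, hcz⟩).adjWithin_mono
      (Set.sdiff_subset_sdiff_left Set.subset_union_right)

theorem IsLobe.inter_subsingleton {L₁ L₂ : Set V} (h₁ : IsLobe A L₁) (h₂ : IsLobe A L₂)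
    (hne : L₁ ≠ L₂) : (L₁ ∩ L₂).Subsingleton := by
  intro a ha b hb
  by_contra hab
  have hU := h₁.1.union h₂.1 hab ha hb
  exact hne ((h₁.2 _ hU Set.subset_union_left).symm.trans (h₂.2 _ hU Set.subset_union_right))

theorem TwoConnOn.exists_isLobe_superset (hS : TwoConnOn A S) : ∃ L, IsLobe A L ∧ S ⊆ L := by
  have hchain : ∀ c ⊆ {T | TwoConnOn A T ∧ S ⊆ T}, IsChain (· ⊆ ·) c → c.Nonempty →
      ∃ ub ∈ {T | TwoConnOn A T ∧ S ⊆ T}, ∀ s ∈ c, s ⊆ ub := by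
    intro c hc hchain ⟨t₀, ht₀⟩
    have hdir := hchain.directedOn
    have hsub : S ⊆ ⋃₀ c := (hc ht₀).2.trans (Set.subset_sUnion_of_mem ht₀)
    refine ⟨⋃₀ c, ⟨⟨hS.1.mono hsub, ?_, ?_⟩, hsub⟩, fun s hs => Set.subset_sUnion_of_mem hs⟩
    · rintro u ⟨t₁, ht₁, hu⟩ v ⟨t₂, ht₂, hv⟩
      obtain ⟨t, ht, h₁, h₂⟩ := hdir t₁ ht₁ t₂ ht₂
      exact ((hc ht).1.2.1 u (h₁ hu) v (h₂ hv)).adjWithin_mono (Set.subset_sUnion_of_mem ht)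
    · rintro w - u ⟨⟨t₁, ht₁, hu⟩, huw⟩ v ⟨⟨t₂, ht₂, hv⟩, hvw⟩
      obtain ⟨t, ht, h₁, h₂⟩ := hdir t₁ ht₁ t₂ ht₂
      exact ((hc ht).1.connOn_diff w u ⟨h₁ hu, huw⟩ v ⟨h₂ hv, hvw⟩).adjWithin_mono
        (Set.sdiff_subset_sdiff_left (Set.subset_sUnion_of_mem ht))
  obtain ⟨L, hSL, hL⟩ := zorn_subset_nonempty _ hchain S ⟨hS, subset_rfl⟩
  exact ⟨L, ⟨hL.prop.1, fun L' hL' hLL' => (hL.eq_of_subset ⟨hL', hSL.trans hLL'⟩ hLL').symm⟩,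
    hSL⟩

theorem Relation.ReflTransGen.mem_of_adjWithin {a b : V}
    (h : ReflTransGen (AdjWithin A S) a b) (ha : a ∈ S) : b ∈ S := by
  induction h with
  | refl => exact ha
  | tail _ hbc _ => exact hbc.2.2

theorem exists_adj_of_not_reflTransGen (hconn : ConnOn A Set.univ) {v a b : V} (ha : a ≠ v)
    (hab : ¬ ReflTransGen (AdjWithin A {v}ᶜ) a b) :
    ∃ y, y ≠ v ∧ ReflTransGen (AdjWithin A {v}ᶜ) a y ∧ DigraphAdj A y v := by
  have hwalk := hconn a trivial b trivial
  induction hwalk with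
  | refl => exact absurd .refl hab
  | @tail c d _ hcd ih =>
    by_cases hac : ReflTransGen (AdjWithin A {v}ᶜ) a c
    · have hcv : c ≠ v := hac.mem_of_adjWithin (S := {v}ᶜ) ha
      by_cases hdv : d = v
      · exact ⟨c, hcv, hac, hdv ▸ hcd.1⟩
      · exact absurd (hac.tail ⟨hcd.1, hcv, hdv⟩) hab
    · exact ih hac

theorem IsCutVertex.exists_isLobe_ne (hconn : ConnOn A Set.univ) {v : V}
    (hv : IsCutVertex A v) (Λ : Set V) : ∃ L, IsLobe A L ∧ v ∈ L ∧ L ≠ Λ := by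
  obtain ⟨a, ha, b, hb, hab⟩ : ∃ a ∈ ({v}ᶜ : Set V), ∃ b ∈ ({v}ᶜ : Set V),
      ¬ ReflTransGen (AdjWithin A {v}ᶜ) a b := by
    by_contra! h
    exact hv h
  obtain ⟨y, hyv, hay, hy⟩ := exists_adj_of_not_reflTransGen hconn ha hab
  obtain ⟨y', hy'v, hby', hy'⟩ :=
    exists_adj_of_not_reflTransGen hconn hb fun h => hab h.adjWithin_symm
  obtain ⟨L₁, hL₁, h₁⟩ := (twoConnOn_pair hyv hy).exists_isLobe_superset
  obtain ⟨L₂, hL₂, h₂⟩ := (twoConnOn_pair hy'v hy').exists_isLobe_superset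
  have hL₁₂ : L₁ ≠ L₂ := by
    rintro rfl
    have hyy' := (hL₁.1.connOn_diff v y ⟨h₁ (by simp), hyv⟩ y' ⟨h₂ (by simp), hy'v⟩).adjWithin_mono
      (T := {v}ᶜ) fun z hz => hz.2
    exact hab ((hay.trans hyy').trans hby'.adjWithin_symm)
  by_cases h : L₁ = Λ
  · exact ⟨L₂, hL₂, h₂ (by simp), fun h' => hL₁₂ (h.trans h'.symm)⟩
  · exact ⟨L₁, hL₁, h₁ (by simp), h⟩

end Lobes

section Gates

variable {V : Type*} {A : V → V → Prop} {Λ : Set V}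

/-- `x` reaches `w` by a walk meeting `Λ` at most in `w`. -/
def EntersAt (A : V → V → Prop) (Λ : Set V) (x w : V) : Prop :=
  ReflTransGen (AdjWithin A (Λ \ {w})ᶜ) x w

theorem EntersAt.eq_of_mem {x w : V} (h : EntersAt A Λ x w) (hx : x ∈ Λ) : x = w := by
  rcases h.cases_head with h | ⟨_, hstep, -⟩
  · exact h
  · by_contra hxw
    exact hstep.2.1 ⟨hx, hxw⟩

/-- The ear argument: two entry points would give an ear of `Λ`, contradicting maximality. -/
theorem IsLobe.eq_of_entersAt (hΛ : IsLobe A Λ) {x w w' : V} (hw : w ∈ Λ) (hw' : w' ∈ Λ)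
    (h : EntersAt A Λ x w) (h' : EntersAt A Λ x w') : w = w' := by
  by_cases hx : x ∈ Λ
  · exact (h.eq_of_mem hx).symm.trans (h'.eq_of_mem hx)
  by_contra hne
  set Q : V → V → Prop := fun a b => AdjWithin A (Λ \ {w})ᶜ a b ∨ AdjWithin A (Λ \ {w'})ᶜ a b
  have hQ : ReflTransGen Q w w' :=
    (ReflTransGen.mono (fun _ _ => Or.inl) _ _ h.adjWithin_symm).trans
      (ReflTransGen.mono (fun _ _ => Or.inr) _ _ h')
  obtain ⟨I, hchain, hnodup⟩ := exists_nodup_isChain_of_reflTransGen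
    (fun _ _ hab => hab.imp AdjWithin.symm AdjWithin.symm) hne hQ
  have hmem : ∀ z ∈ (w :: I) ++ [w'], z ∈ Λ → z = w ∨ z = w' := by
    refine hchain.induction _ _ (fun a b hab _ hbΛ => ?_) (fun _ _ => .inl rfl)
    rcases hab with ⟨-, -, hb⟩ | ⟨-, -, hb⟩
    · exact .inl (by_contra fun hbw => hb ⟨hbΛ, hbw⟩)
    · exact .inr (by_contra fun hbw => hb ⟨hbΛ, hbw⟩)
  have hI : ∀ z ∈ I, z ∉ Λ := by
    intro z hz hzΛ
    rcases hmem z (by simp [hz]) hzΛ with rfl | rfl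
    · exact (nodup_cons.1 hnodup).1 (by simp [hz])
    · exact (nodup_append.1 hnodup).2.2 z (mem_cons_of_mem _ hz) z (mem_singleton_self _) rfl
  have hIne : I ≠ [] := by
    rintro rfl
    rcases isChain_pair.1 hchain with ⟨-, -, hw'w⟩ | ⟨-, hww', -⟩
    · exact hw'w ⟨hw', Ne.symm hne⟩
    · exact hww' ⟨hw, hne⟩
  have hear := hΛ.1.union_ear hw hw' (hchain.imp fun _ _ h => h.elim (·.1) (·.1)) hnodup
  obtain ⟨z, hz⟩ := exists_mem_of_ne_nil I hIne
  exact hI z hz (hΛ.2 _ hear Set.subset_union_left ▸ Or.inr hz)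

theorem exists_entersAt (hconn : ConnOn A Set.univ) (hΛ : Λ.Nonempty) (x : V) :
    ∃ w ∈ Λ, EntersAt A Λ x w := by
  obtain ⟨w₀, hw₀⟩ := hΛ
  induction (hconn x trivial w₀ trivial) using ReflTransGen.head_induction_on with
  | refl => exact ⟨w₀, hw₀, .refl⟩
  | @head a c hac _ ih =>
    obtain ⟨w, hw, hcw⟩ := ih
    by_cases ha : a ∈ Λ
    · exact ⟨a, ha, .refl⟩
    by_cases hc : c ∈ Λ
    · exact ⟨c, hc, .single ⟨hac.1, fun h => ha h.1, fun h => h.2 rfl⟩⟩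
    · exact ⟨w, hw, .head ⟨hac.1, fun h => ha h.1, fun h => hc h.1⟩ hcw⟩

/-- `p x` is the vertex through which `x` enters `Λ`. -/
theorem IsLobe.exists_gate (hΛ : IsLobe A Λ) (hconn : ConnOn A Set.univ) :
    ∃ p : V → V, (∀ x, p x ∈ Λ) ∧ (∀ x ∈ Λ, p x = x) ∧
      ∀ M, IsLobe A M → M ≠ Λ → ∀ x ∈ M, ∀ y ∈ M, p x = p y := by
  choose p hpΛ hp using exists_entersAt hconn hΛ.1.1.nonempty
  have huniq : ∀ {x w}, w ∈ Λ → EntersAt A Λ x w → p x = w :=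
    fun hw h => hΛ.eq_of_entersAt (hpΛ _) hw (hp _) h
  refine ⟨p, hpΛ, fun x hx => ((hp x).eq_of_mem hx).symm, fun M hM hMΛ x hx y hy => ?_⟩
  have hwalk : ∀ w, M ⊆ (Λ \ {w})ᶜ → ∀ a ∈ M, ∀ b ∈ M, EntersAt A Λ b w → EntersAt A Λ a w :=
    fun w hMw a ha b hb h => ((hM.1.2.1 a ha b hb).adjWithin_mono hMw).trans h
  by_cases hint : ∃ c, c ∈ M ∩ Λ
  · obtain ⟨c, hc⟩ := hint
    have hMc : M ⊆ (Λ \ {c})ᶜ :=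
      fun d hd hdΛ => hdΛ.2 (hM.inter_subsingleton hΛ hMΛ ⟨hd, hdΛ.1⟩ hc)
    rw [huniq hc.2 (hwalk c hMc x hx c hc.1 .refl), huniq hc.2 (hwalk c hMc y hy c hc.1 .refl)]
  · have hMy : M ⊆ (Λ \ {p y})ᶜ := fun d hd hdΛ => hint ⟨d, hd, hdΛ.1⟩
    exact huniq (hpΛ y) (hwalk _ hMy x hx y hy (hp y))

end Gates

section Action

open MulAction

variable {V G : Type*} [Group G] [MulAction G V] {A : V → V → Prop} {S Λ : Set V}

def PreservesArcs (G : Type*) [Group G] [MulAction G V] (A : V → V → Prop) : Prop :=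
  ∀ (g : G) (u v : V), A u v ↔ A (g • u) (g • v)

theorem ConnOn.smul (hA : PreservesArcs G A) (g : G) (h : ConnOn A S) : ConnOn A (g • S) := by
  rintro _ ⟨u, hu, rfl⟩ _ ⟨v, hv, rfl⟩
  refine ReflTransGen.lift (g • ·) (fun a b hab => ⟨?_, Set.smul_mem_smul_set hab.2.1,
    Set.smul_mem_smul_set hab.2.2⟩) _ _ (h u hu v hv)
  exact hab.1.imp (hA g a b).1 (hA g b a).1

theorem TwoConnOn.smul (hA : PreservesArcs G A) (g : G) (h : TwoConnOn A S) :
    TwoConnOn A (g • S) := by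
  obtain ⟨⟨x, hx, y, hy, hxy⟩, hconn, hdel⟩ := h
  refine ⟨⟨g • x, Set.smul_mem_smul_set hx, g • y, Set.smul_mem_smul_set hy,
    fun h => hxy (smul_left_cancel g h)⟩, hconn.smul hA g, ?_⟩
  rintro _ ⟨w, hw, rfl⟩
  rw [← Set.smul_set_singleton, ← Set.smul_set_sdiff]
  exact (hdel w hw).smul hA g

theorem IsLobe.smul (hA : PreservesArcs G A) (g : G) (h : IsLobe A Λ) : IsLobe A (g • Λ) := by
  refine ⟨h.1.smul hA g, fun L hL hΛL => ?_⟩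
  have := h.2 (g⁻¹ • L) (hL.smul hA g⁻¹) (by rwa [Set.subset_smul_set_iff, inv_inv])
  rw [← this, smul_inv_smul]

theorem IsCutVertex.smul (hA : PreservesArcs G A) (g : G) {v : V} (h : IsCutVertex A v) :
    IsCutVertex A (g • v) := by
  intro hconn
  apply h
  simpa [Set.smul_set_compl] using hconn.smul hA g⁻¹

theorem PrimitiveOn.eqvGen_eq_or_forall
    (hprim : PrimitiveOn (⊤ : Subgroup G) (Set.univ : Set V)) {s : V → V → Prop}
    (hs : ∀ (g : G) x y, s x y → s (g • x) (g • y)) :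
    (∀ x y, EqvGen s x y → x = y) ∨ ∀ x y, EqvGen s x y := by
  have hequiv := EqvGen.is_equivalence s
  have hinv : ∀ g ∈ (⊤ : Subgroup G), ∀ x ∈ Set.univ, ∀ y ∈ Set.univ,
      EqvGen s x y → EqvGen s (g • x) (g • y) := by
    rintro g - x - y - h
    induction h with
    | rel x y h => exact .rel _ _ (hs g x y h)
    | refl x => exact .refl _
    | symm x y _ ih => exact .symm _ _ ih
    | trans x y z _ _ ih₁ ih₂ => exact .trans _ _ _ ih₁ ih₂
  rcases hprim.2 (EqvGen s) ⟨fun x _ => hequiv.refl x, fun _ _ _ _ => hequiv.symm,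
    fun _ _ _ _ _ _ => hequiv.trans⟩ hinv with h | h
  · exact .inl fun x y => h x trivial y trivial
  · exact .inr fun x y => h x trivial y trivial

theorem smul_inv_ne_of_notMem_stabilizer {g : G} (hg : g ∉ stabilizer G Λ) : g⁻¹ • Λ ≠ Λ :=
  fun h => hg (inv_mem_iff.1 (mem_stabilizer_iff.2 h))

variable (hA : PreservesArcs G A) (hprim : PrimitiveOn (⊤ : Subgroup G) (Set.univ : Set V))
  (hconn : ConnOn A Set.univ)
include hA hprim hconn

theorem IsLobe.exists_smul_eq (hΛ : IsLobe A Λ) {M : Set V} (hM : IsLobe A M) :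
    ∃ g : G, g • Λ = M := by
  by_contra! hno
  obtain ⟨p, -, hpid, hpconst⟩ := hΛ.exists_gate hconn
  set s : V → V → Prop := fun x y => ∃ M', IsLobe A M' ∧ (∀ g : G, g • Λ ≠ M') ∧ x ∈ M' ∧ y ∈ M'
  have hs : ∀ (g : G) x y, s x y → s (g • x) (g • y) := by
    rintro g x y ⟨M', hM', hno', hx, hy⟩
    refine ⟨g • M', hM'.smul hA g, fun g' h => hno' (g⁻¹ * g') ?_,
      Set.smul_mem_smul_set hx, Set.smul_mem_smul_set hy⟩
    rw [mul_smul, h, inv_smul_smul]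
  have hsp : ∀ x y, s x y → p x = p y := fun x y ⟨M', hM', hno', hx, hy⟩ =>
    hpconst M' hM' (fun h => hno' 1 (by rw [one_smul, h])) x hx y hy
  obtain ⟨x, hx, y, hy, hxy⟩ := hM.1.1
  rcases hprim.eqvGen_eq_or_forall hs with htriv | huniv
  · exact hxy (htriv x y (.rel _ _ ⟨M, hM, hno, hx, hy⟩))
  · obtain ⟨u, hu, v, hv, huv⟩ := hΛ.1.1
    have := (eq_equivalence.comap p).eqvGen_iff.1
      (EqvGen.mono hsp u v (huniv u v))
    exact huv (by rwa [← hpid u hu, ← hpid v hv])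

end Action

section Stabiliser

open MulAction

variable {V G : Type*} [Group G] [MulAction G V] {A : V → V → Prop} {Λ : Set V}

theorem Set.exists_mem_ne_ne {S : Set V}
    (hthree : ∃ a b c : V, a ∈ S ∧ b ∈ S ∧ c ∈ S ∧ a ≠ b ∧ a ≠ c ∧ b ≠ c) (u v : V) :
    ∃ c ∈ S, c ≠ u ∧ c ≠ v := by
  obtain ⟨a, b, c, ha, hb, hc, hab, hac, hbc⟩ := hthree
  by_contra! h
  rcases eq_or_ne a u with rfl | hau
  · exact hbc ((h b hb (Ne.symm hab)).trans (h c hc (Ne.symm hac)).symm)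
  rcases eq_or_ne b u with rfl | hbu
  · exact hac ((h a ha hau).trans (h c hc (Ne.symm hbc)).symm)
  · exact hab ((h a ha hau).trans (h b hb hbu).symm)

theorem transitiveOn_of_orbit_cover {H : Subgroup G} {S : Set V}
    (hthree : ∃ a b c : V, a ∈ S ∧ b ∈ S ∧ c ∈ S ∧ a ≠ b ∧ a ≠ c ∧ b ≠ c)
    (hcover : ∀ u ∈ S, ∀ v ∈ S, u ≠ v → ∀ x ∈ S, (∃ h ∈ H, h • u = x) ∨ ∃ h ∈ H, h • v = x) :
    TransitiveOn H S := by
  intro u hu v hv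
  by_cases huv : u = v
  · exact ⟨1, one_mem H, by rw [one_smul, huv]⟩
  obtain ⟨c, hc, hcu, hcv⟩ := Set.exists_mem_ne_ne hthree u v
  have hsymm : ∀ {x y : V}, (∃ h ∈ H, h • x = y) → ∃ h ∈ H, h • y = x :=
    fun ⟨h, hh, hxy⟩ => ⟨h⁻¹, inv_mem hh, by rw [← hxy, inv_smul_smul]⟩
  rcases hcover u hu c hc (Ne.symm hcu) v hv with huv' | ⟨h, hh, hcv'⟩
  · exact huv'
  rcases hcover v hv c hc (Ne.symm hcv) u hu with hvu | ⟨k, hk, hcu'⟩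
  · exact hsymm hvu
  · exact ⟨h * k⁻¹, mul_mem hh (inv_mem hk), by rw [mul_smul, ← hcu', inv_smul_smul, hcv']⟩

variable (hA : PreservesArcs G A) (hprim : PrimitiveOn (⊤ : Subgroup G) (Set.univ : Set V))
  (hconn : ConnOn A Set.univ)
include hA hprim hconn

theorem IsLobe.orbit_cover (hΛ : IsLobe A Λ) {u v : V} (hu : u ∈ Λ) (hv : v ∈ Λ) (huv : u ≠ v) :
    ∀ x ∈ Λ, (∃ h ∈ stabilizer G Λ, h • u = x) ∨ ∃ h ∈ stabilizer G Λ, h • v = x := by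
  obtain ⟨p, -, hpid, hpconst⟩ := hΛ.exists_gate hconn
  set O : Set V := {x | (∃ h ∈ stabilizer G Λ, h • u = x) ∨ ∃ h ∈ stabilizer G Λ, h • v = x}
  set s : V → V → Prop := fun x y => ∃ g : G, g • x = u ∧ g • y = v
  set r : V → V → Prop := fun a b => p a = p b ∨ (p a ∈ O ∧ p b ∈ O)
  have hs : ∀ (g : G) x y, s x y → s (g • x) (g • y) := fun g x y ⟨k, hx, hy⟩ =>
    ⟨k * g⁻¹, by rw [mul_smul, inv_smul_smul, hx], by rw [mul_smul, inv_smul_smul, hy]⟩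
  have hr : Equivalence r := by
    refine ⟨fun _ => .inl rfl, fun h => h.imp Eq.symm And.symm, fun h h' => ?_⟩
    rcases h with h | h <;> rcases h' with h' | h'
    exacts [.inl (h.trans h'), .inr (h ▸ h'), .inr ⟨h.1, h' ▸ h.2⟩, .inr ⟨h.1, h'.2⟩]
  have hsr : ∀ x y, s x y → r x y := by
    rintro x y ⟨g, hxu, hyv⟩
    have hx : x ∈ g⁻¹ • Λ := Set.mem_inv_smul_set_iff.2 (hxu ▸ hu)
    have hy : y ∈ g⁻¹ • Λ := Set.mem_inv_smul_set_iff.2 (hyv ▸ hv)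
    by_cases hg : g ∈ stabilizer G Λ
    · rw [mem_stabilizer_iff.1 (inv_mem hg)] at hx hy
      refine .inr ⟨?_, ?_⟩
      · rw [hpid x hx]; exact .inl ⟨g⁻¹, inv_mem hg, by rw [← hxu, inv_smul_smul]⟩
      · rw [hpid y hy]; exact .inr ⟨g⁻¹, inv_mem hg, by rw [← hyv, inv_smul_smul]⟩
    · exact .inl (hpconst _ (hΛ.smul hA g⁻¹) (smul_inv_ne_of_notMem_stabilizer hg) x hx y hy)
  rcases hprim.eqvGen_eq_or_forall hs with htriv | huniv
  · exact absurd (htriv u v (.rel _ _ ⟨1, one_smul _ _, one_smul _ _⟩)) huv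
  intro x hx
  rcases hr.eqvGen_iff.1 (EqvGen.mono hsr x u (huniv x u)) with hxu | ⟨hxO, -⟩
  · rw [hpid x hx, hpid u hu] at hxu
    exact .inl ⟨1, one_mem _, by rw [one_smul, hxu]⟩
  · rwa [hpid x hx] at hxO

theorem IsLobe.transitiveOn_stabilizer (hΛ : IsLobe A Λ)
    (hthree : ∃ a b c : V, a ∈ Λ ∧ b ∈ Λ ∧ c ∈ Λ ∧ a ≠ b ∧ a ≠ c ∧ b ≠ c) :
    TransitiveOn (stabilizer G Λ) Λ :=
  transitiveOn_of_orbit_cover hthree fun _ hu _ hv huv => hΛ.orbit_cover hA hprim hconn hu hv huv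

theorem IsLobe.primitiveOn_stabilizer (hΛ : IsLobe A Λ)
    (htrans : TransitiveOn (stabilizer G Λ) Λ) : PrimitiveOn (stabilizer G Λ) Λ := by
  obtain ⟨p, hpΛ, hpid, hpconst⟩ := hΛ.exists_gate hconn
  refine ⟨htrans, fun r hr hrinv => ?_⟩
  set s : V → V → Prop := fun x y => ∃ g : G, g • x ∈ Λ ∧ g • y ∈ Λ ∧ r (g • x) (g • y)
  have hs : ∀ (g : G) x y, s x y → s (g • x) (g • y) := fun g x y ⟨k, hx, hy, hxy⟩ =>
    ⟨k * g⁻¹, by rwa [mul_smul, inv_smul_smul], by rwa [mul_smul, inv_smul_smul],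
      by rwa [mul_smul, inv_smul_smul, mul_smul, inv_smul_smul]⟩
  have hequiv : Equivalence fun a b => r (p a) (p b) :=
    ⟨fun a => hr.1 _ (hpΛ a), fun h => hr.2.1 _ (hpΛ _) _ (hpΛ _) h,
      fun h h' => hr.2.2 _ (hpΛ _) _ (hpΛ _) _ (hpΛ _) h h'⟩
  have hsr : ∀ x y, s x y → r (p x) (p y) := by
    rintro x y ⟨g, hgx, hgy, hxy⟩
    have hx : x ∈ g⁻¹ • Λ := Set.mem_inv_smul_set_iff.2 hgx
    have hy : y ∈ g⁻¹ • Λ := Set.mem_inv_smul_set_iff.2 hgy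
    by_cases hg : g ∈ stabilizer G Λ
    · rw [mem_stabilizer_iff.1 (inv_mem hg)] at hx hy
      rw [hpid x hx, hpid y hy]
      simpa using hrinv g⁻¹ (inv_mem hg) _ hgx _ hgy hxy
    · rw [hpconst _ (hΛ.smul hA g⁻¹) (smul_inv_ne_of_notMem_stabilizer hg) x hx y hy]
      exact hr.1 _ (hpΛ y)
  rcases hprim.eqvGen_eq_or_forall hs with htriv | huniv
  · exact .inl fun x hx y hy hxy =>
      htriv x y (.rel _ _ ⟨1, by rwa [one_smul], by rwa [one_smul], by rwa [one_smul, one_smul]⟩)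
  · refine .inr fun x hx y hy => ?_
    have := hequiv.eqvGen_iff.1 (EqvGen.mono hsr x y (huniv x y))
    rwa [hpid x hx, hpid y hy] at this

end Stabiliser

section Regular

open MulAction

variable {V G : Type*} [Group G] [MulAction G V] {Λ : Set V}

theorem toPermHom_stabilizer_eq_iff {a b : stabilizer G Λ} :
    toPermHom _ Λ a = toPermHom _ Λ b ↔ ∀ y ∈ Λ, (a : G) • y = (b : G) • y := by
  simp [Equiv.ext_iff, Subtype.ext_iff]

theorem RegularOn.toPermHom_eq (hreg : RegularOn (stabilizer G Λ) Λ) {a b : stabilizer G Λ}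
    {o : V} (ho : o ∈ Λ) (h : (a : G) • o = (b : G) • o) : toPermHom _ Λ a = toPermHom _ Λ b := by
  refine toPermHom_stabilizer_eq_iff.2 fun y hy => ?_
  have hfix := hreg.2 _ (b⁻¹ * a).2 o ho (by simp [mul_smul, h]) y hy
  simpa [mul_smul, inv_smul_eq_iff] using hfix

theorem RegularOn.toPermHom_eq_one_or_zpow (hreg : RegularOn (stabilizer G Λ) Λ)
    (hprim : PrimitiveOn (stabilizer G Λ) Λ) {o : V} (ho : o ∈ Λ) (k : stabilizer G Λ) :
    toPermHom _ Λ k = 1 ∨ ∀ q : stabilizer G Λ, ∃ n : ℤ, toPermHom _ Λ q = toPermHom _ Λ k ^ n := by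
  have hmem : ∀ a : stabilizer G Λ, ∀ y ∈ Λ, (a : G) • y ∈ Λ := fun a y hy => (a • ⟨y, hy⟩ : Λ).2
  -- the blocks `a ⟨k⟩ • o` of the regular action
  set r : V → V → Prop := fun x y => ∃ (a : stabilizer G Λ) (n : ℤ),
    (a : G) • o = x ∧ (a : G) • ((k : G) ^ n • o) = y
  have hr : IsEquivRelOn Λ r := by
    refine ⟨fun x hx => ?_, fun x _ y _ ⟨a, n, hx, hy⟩ => ⟨a * k ^ n, -n, ?_, ?_⟩,
      fun x _ y _ z _ ⟨a, n, hx, hy⟩ ⟨b, m, hy', hz⟩ => ⟨a, n + m, hx, ?_⟩⟩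
    · obtain ⟨a, ha, hax⟩ := hprim.1 o ho x hx
      exact ⟨⟨a, ha⟩, 0, hax, by simpa using hax⟩
    · simpa [mul_smul] using hy
    · simpa [mul_smul] using hx
    · have hba := toPermHom_stabilizer_eq_iff.1
        (hreg.toPermHom_eq (b := a * k ^ n) ho (by simpa [mul_smul, hy] using hy'))
      rw [← hz, hba _ (by simpa using hmem (k ^ m) o ho)]
      simp [mul_smul, zpow_add]
  have hrinv : ∀ h ∈ stabilizer G Λ, ∀ x ∈ Λ, ∀ y ∈ Λ, r x y → r (h • x) (h • y) :=
    fun h hh x _ y _ ⟨a, n, hx, hy⟩ =>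
      ⟨⟨h, hh⟩ * a, n, by simp [mul_smul, hx], by simp [mul_smul, hy]⟩
  rcases hprim.2 r hr hrinv with htriv | huniv
  · refine .inl ((hreg.toPermHom_eq (b := 1) ho ?_).trans (map_one _))
    exact (htriv o ho _ (hmem k o ho) ⟨1, 1, by simp, by simp⟩).symm.trans (one_smul G o).symm
  · refine .inr fun q => ?_
    obtain ⟨a, n, hao, haq⟩ := huniv o ho _ (hmem q o ho)
    have ha := toPermHom_stabilizer_eq_iff.1 (hreg.toPermHom_eq (b := 1) ho (by simpa using hao))
    rw [ha _ (by simpa using hmem (k ^ n) o ho)] at haq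
    refine ⟨n, ?_⟩
    rw [← map_zpow]
    exact hreg.toPermHom_eq ho (by simpa using haq.symm)

theorem RegularOn.toPermHom_commute (hreg : RegularOn (stabilizer G Λ) Λ)
    (hprim : PrimitiveOn (stabilizer G Λ) Λ) (t k : stabilizer G Λ) :
    Commute (toPermHom _ Λ t) (toPermHom _ Λ k) := by
  rcases Λ.eq_empty_or_nonempty with rfl | ⟨o, ho⟩
  · exact Equiv.ext fun ⟨_, hy⟩ => absurd hy (Set.notMem_empty _)
  rcases hreg.toPermHom_eq_one_or_zpow hprim ho k with hk | hk
  · rw [hk]; exact Commute.one_right _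
  · obtain ⟨n, hn⟩ := hk t
    rw [hn]; exact (Commute.refl _).zpow_left n

end Regular

section TreeOfBlocks

variable {V K : Type*} [Group K]

/-- A walk is a start `x` with the list `l` of the vertices after it; it ends at
`l.getLastD x`. -/
def walkWeight (ε : V → V → K) : V → List V → K
  | _, [] => 1
  | x, y :: l => ε x y * walkWeight ε y l

theorem walkWeight_append (ε : V → V → K) (x : V) (l₁ l₂ : List V) :
    walkWeight ε x (l₁ ++ l₂) = walkWeight ε x l₁ * walkWeight ε (l₁.getLastD x) l₂ := by
  induction l₁ generalizing x with
  | nil => simp [walkWeight]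
  | cons y l ih => simp only [cons_append, walkWeight, ih, mul_assoc, getLastD_cons]

theorem walkWeight_map (ε : V → V → K) (f : V → V) (hf : ∀ x y, ε (f x) (f y) = ε x y)
    (x : V) (l : List V) : walkWeight ε (f x) (l.map f) = walkWeight ε x l := by
  induction l generalizing x with
  | nil => rfl
  | cons y l ih => simp only [map_cons, walkWeight, hf, ih]

def CoBlock (B : Set V → Prop) (x y : V) : Prop := ∃ M, B M ∧ x ∈ M ∧ y ∈ M

theorem CoBlock.symm {B : Set V → Prop} {x y : V} (h : CoBlock B x y) : CoBlock B y x :=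
  let ⟨M, hM, hx, hy⟩ := h; ⟨M, hM, hy, hx⟩

variable {B : Set V → Prop} {ε : V → V → K}

theorem exists_step_in_block_of_gate_ne {M : Set V} {p : V → V}
    (hp : ∀ N, B N → N ≠ M → ∀ x ∈ N, ∀ y ∈ N, p x = p y) :
    ∀ (l : List V) (y : V), IsChain (CoBlock B) (y :: l) → p y ≠ p (l.getLastD y) →
      ∃ P b Q, l = P ++ b :: Q ∧ P.getLastD y ∈ M ∧ b ∈ M
  | [], _, _, hne => absurd rfl hne
  | b :: Q, y, hl, hne => by
    obtain ⟨⟨N, hN, hyN, hbN⟩, hQ⟩ := isChain_cons_cons.1 hl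
    by_cases hyb : y ∈ M ∧ b ∈ M
    · exact ⟨[], b, Q, rfl, hyb⟩
    have hpyb : p y = p b := hp N hN (by rintro rfl; exact hyb ⟨hyN, hbN⟩) y hyN b hbN
    obtain ⟨P, b', Q', rfl, hP, hb'⟩ :=
      exists_step_in_block_of_gate_ne hp Q b hQ (by rwa [← hpyb, ← getLastD_cons])
    exact ⟨b :: P, b', Q', rfl, by rwa [getLastD_cons], hb'⟩

def HasTrivialWalk (B : Set V → Prop) (ε : V → V → K) (a b : V) : Prop :=
  ∃ l, IsChain (CoBlock B) (a :: l) ∧ l.getLastD a = b ∧ walkWeight ε a l = 1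

theorem HasTrivialWalk.map (f : V → V) (hf : ∀ x y, CoBlock B x y → CoBlock B (f x) (f y))
    (hε : ∀ x y, ε (f x) (f y) = ε x y) {a b : V} (h : HasTrivialWalk B ε a b) :
    HasTrivialWalk B ε (f a) (f b) :=
  let ⟨l, hl, e, w⟩ := h
  ⟨l.map f, isChain_map_of_isChain f hf hl, by rw [getLastD_map, e],
    by rw [walkWeight_map ε f hε, w]⟩

variable (hgate : ∀ M, B M → ∃ p : V → V,
    (∀ x ∈ M, p x = x) ∧ ∀ N, B N → N ≠ M → ∀ x ∈ N, ∀ y ∈ N, p x = p y)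
  (hcocycle : ∀ M, B M → ∀ x ∈ M, ∀ y ∈ M, ∀ z ∈ M, ε x y * ε y z = ε x z)
include hgate hcocycle

theorem walkWeight_eq_one_of_closed {x : V} {l : List V} (hl : IsChain (CoBlock B) (x :: l))
    (hclosed : l.getLastD x = x) : walkWeight ε x l = 1 := by
  induction hn : l.length using Nat.strong_induction_on generalizing x l with
  | _ n ih =>
  rcases l with _ | ⟨y, m⟩
  · rfl
  obtain ⟨⟨M, hM, hxM, hyM⟩, hm⟩ := isChain_cons_cons.1 hl
  rw [getLastD_cons] at hclosed
  have hself : ∀ z ∈ M, ε z z = 1 := fun z hz => mul_eq_left.1 (hcocycle M hM z hz z hz z hz)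
  by_cases hxy : x = y
  · subst hxy
    rw [walkWeight, hself x hxM, ih m.length (by simp [← hn]) hm hclosed rfl, mul_one]
  -- the gate of `M` forces a later step `a → b` inside `M`; it splits the walk into the
  -- shorter closed walks `y, …, a, y` and `x, b, …, x`
  obtain ⟨p, hpM, hpN⟩ := hgate M hM
  obtain ⟨P, b, Q, rfl, haM, hbM⟩ := exists_step_in_block_of_gate_ne hpN m y hm
    (by rw [hclosed, hpM x hxM, hpM y hyM]; exact Ne.symm hxy)
  set a := P.getLastD y
  have hP : IsChain (CoBlock B) (y :: P) := by simpa using hm.left_of_append (l₂ := b :: Q)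
  have hQ : IsChain (CoBlock B) (b :: Q) :=
    (show IsChain (CoBlock B) ((y :: P) ++ b :: Q) from hm).right_of_append
  have hloop₁ : walkWeight ε y P * ε a y = 1 := by
    have := ih (P ++ [y]).length (by simp [← hn])
      (hP.cons_append (isChain_pair.2 ⟨M, hM, haM, hyM⟩)) getLastD_concat rfl
    rwa [walkWeight_append, walkWeight, walkWeight, mul_one] at this
  have hloop₂ : ε x b * walkWeight ε b Q = 1 :=
    ih (b :: Q).length (by simp [← hn]) (isChain_cons_cons.2 ⟨⟨M, hM, hxM, hbM⟩, hQ⟩)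
      (by rwa [getLastD_append] at hclosed) rfl
  have hPa : walkWeight ε y P = ε y a := by
    rw [eq_inv_of_mul_eq_one_left hloop₁,
      eq_inv_of_mul_eq_one_left ((hcocycle M hM y hyM a haM y hyM).trans (hself y hyM))]
  calc walkWeight ε x (y :: (P ++ b :: Q))
      = ε x y * walkWeight ε y P * ε a b * walkWeight ε b Q := by
        simp only [walkWeight, walkWeight_append, mul_assoc]; rfl
    _ = ε x b * walkWeight ε b Q := by
        rw [hPa, hcocycle M hM x hxM y hyM a haM, hcocycle M hM x hxM a haM b hbM]
    _ = 1 := hloop₂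

theorem hasTrivialWalk_equivalence : Equivalence (HasTrivialWalk B ε) := by
  refine ⟨fun a => ⟨[], .singleton a, rfl, rfl⟩, fun {a b} ⟨l, h, e, w⟩ => ?_,
    fun ⟨l₁, h₁, e₁, w₁⟩ ⟨l₂, h₂, e₂, w₂⟩ => ⟨l₁ ++ l₂, h₁.cons_append (e₁ ▸ h₂),
      by rw [getLastD_append, e₁, e₂], by rw [walkWeight_append, e₁, w₁, w₂, one_mul]⟩⟩
  -- any walk back from `b` closes up a walk of weight `1`, so has weight `1` itself
  have : Std.Symm (CoBlock B) := ⟨fun _ _ h => h.symm⟩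
  have hba : ReflTransGen (CoBlock B) b a := ReflTransGen.stdSymm.symm _ _
    (relationReflTransGen_of_exists_isChain_cons l h (by rw [getLast_eq_getLastD, e]))
  obtain ⟨l', h', e'⟩ := exists_isChain_cons_of_relationReflTransGen hba
  rw [getLast_eq_getLastD] at e'
  refine ⟨l', h', e', ?_⟩
  have := walkWeight_eq_one_of_closed hgate hcocycle (h.cons_append (e ▸ h'))
    (by rw [getLastD_append, e, e'])
  rwa [walkWeight_append, e, w, one_mul] at this

theorem HasTrivialWalk.eq_one {a b : V} (h : HasTrivialWalk B ε a b) (hab : CoBlock B a b) :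
    ε a b = 1 := by
  obtain ⟨l, hl, e, w⟩ := h
  obtain ⟨M, hM, ha, hb⟩ := hab
  have hloop := walkWeight_eq_one_of_closed hgate hcocycle (l := l ++ [a])
    (hl.cons_append (isChain_pair.2 (e ▸ ⟨M, hM, hb, ha⟩))) getLastD_concat
  rw [walkWeight_append, w, e, one_mul, walkWeight, walkWeight, mul_one] at hloop
  have hcoc := hcocycle M hM a ha b hb a ha
  rw [hloop, mul_one] at hcoc
  rw [hcoc]
  exact mul_eq_left.1 (hcocycle M hM a ha a ha a ha)

end TreeOfBlocks

section StepLabel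

open MulAction

variable {V G : Type*} [Group G] [MulAction G V] {A : V → V → Prop} {Λ : Set V}

def IsStepLabel (G : Type*) [Group G] [MulAction G V] (Λ : Set V) (x y : V)
    (κ : Equiv.Perm Λ) : Prop :=
  ∃ (g : G) (t : stabilizer G Λ), g • x ∈ Λ ∧ g • y ∈ Λ ∧ (t : G) • g • x = g • y ∧
    toPermHom _ Λ t = κ

open Classical in
noncomputable def stepLabel (G : Type*) [Group G] [MulAction G V] (Λ : Set V) (x y : V) :
    Equiv.Perm Λ :=
  if h : ∃ κ, IsStepLabel G Λ x y κ then h.choose else 1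

theorem isStepLabel_of_mem (t : stabilizer G Λ) {a : V} (ha : a ∈ Λ) :
    IsStepLabel G Λ a ((t : G) • a) (toPermHom _ Λ t) :=
  ⟨1, t, by simpa, by simpa using (t • ⟨a, ha⟩ : Λ).2, by simp, rfl⟩

theorem IsStepLabel.smul {x y : V} {κ : Equiv.Perm Λ} (h : IsStepLabel G Λ x y κ) (k : G) :
    IsStepLabel G Λ (k • x) (k • y) κ :=
  let ⟨g, t, hx, hy, ht, hκ⟩ := h
  ⟨g * k⁻¹, t, by simpa [mul_smul], by simpa [mul_smul], by simpa [mul_smul], hκ⟩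

variable (hA : PreservesArcs G A) (hΛ : IsLobe A Λ) (hreg : RegularOn (stabilizer G Λ) Λ)
  (hprim : PrimitiveOn (stabilizer G Λ) Λ)
include hA hΛ hreg hprim

/-- Well defined because `G_Λ^Λ` is abelian and two distinct points lie in at most one lobe. -/
theorem IsStepLabel.unique {x y : V} {κ κ' : Equiv.Perm Λ} (h : IsStepLabel G Λ x y κ)
    (h' : IsStepLabel G Λ x y κ') : κ = κ' := by
  obtain ⟨g, t, hgx, hgy, ht, rfl⟩ := h
  obtain ⟨g', t', hgx', hgy', ht', rfl⟩ := h'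
  by_cases hxy : x = y
  · subst hxy
    rw [hreg.toPermHom_eq (a := t) (b := 1) hgx (by simpa using ht),
      hreg.toPermHom_eq (a := t') (b := 1) hgx' (by simpa using ht')]
  have hlobe : g⁻¹ • Λ = g'⁻¹ • Λ := by
    by_contra hne
    exact hxy ((hΛ.smul hA g⁻¹).inter_subsingleton (hΛ.smul hA g'⁻¹) hne
      ⟨Set.mem_inv_smul_set_iff.2 hgx, Set.mem_inv_smul_set_iff.2 hgx'⟩
      ⟨Set.mem_inv_smul_set_iff.2 hgy, Set.mem_inv_smul_set_iff.2 hgy'⟩)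
  set k : stabilizer G Λ :=
    ⟨g' * g⁻¹, by rw [mem_stabilizer_iff, mul_smul, hlobe, smul_inv_smul]⟩
  have hconj : toPermHom _ Λ t' = toPermHom _ Λ (k * t * k⁻¹) :=
    hreg.toPermHom_eq hgx' (by simp [k, mul_smul, ht, ht'])
  rw [hconj, map_mul, map_mul, map_inv, (hreg.toPermHom_commute hprim k t).eq,
    mul_inv_cancel_right]

theorem stepLabel_eq {x y : V} {κ : Equiv.Perm Λ} (h : IsStepLabel G Λ x y κ) :
    stepLabel G Λ x y = κ := by
  have hex : ∃ κ, IsStepLabel G Λ x y κ := ⟨κ, h⟩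
  rw [stepLabel, dif_pos hex]
  exact hex.choose_spec.unique hA hΛ hreg hprim h

theorem stepLabel_smul (k : G) (x y : V) :
    stepLabel G Λ (k • x) (k • y) = stepLabel G Λ x y := by
  by_cases hex : ∃ κ, IsStepLabel G Λ x y κ
  · obtain ⟨κ, hκ⟩ := hex
    rw [stepLabel_eq hA hΛ hreg hprim hκ, stepLabel_eq hA hΛ hreg hprim (hκ.smul k)]
  · have hex' : ¬ ∃ κ, IsStepLabel G Λ (k • x) (k • y) κ :=
      fun ⟨κ, hκ⟩ => hex ⟨κ, by simpa using hκ.smul k⁻¹⟩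
    rw [stepLabel, stepLabel, dif_neg hex, dif_neg hex']

theorem stepLabel_mul_stepLabel {g : G} {x y z : V} (hx : g • x ∈ Λ) (hy : g • y ∈ Λ)
    (hz : g • z ∈ Λ) : stepLabel G Λ x y * stepLabel G Λ y z = stepLabel G Λ x z := by
  obtain ⟨t, ht, hxy⟩ := hprim.1 _ hx _ hy
  obtain ⟨t', ht', hyz⟩ := hprim.1 _ hy _ hz
  rw [stepLabel_eq hA hΛ hreg hprim ⟨g, ⟨t, ht⟩, hx, hy, hxy, rfl⟩,
    stepLabel_eq hA hΛ hreg hprim ⟨g, ⟨t', ht'⟩, hy, hz, hyz, rfl⟩,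
    stepLabel_eq hA hΛ hreg hprim
      ⟨g, ⟨t', ht'⟩ * ⟨t, ht⟩, hx, hz, by simp [mul_smul, hxy, hyz], rfl⟩,
    map_mul, (hreg.toPermHom_commute hprim _ _).eq]

end StepLabel

section NotRegular

open MulAction

variable {V G : Type*} [Group G] [MulAction G V] {A : V → V → Prop} {Λ : Set V}

theorem exists_gate_of_isLobe (hconn : ConnOn A Set.univ) (M : Set V) (hM : IsLobe A M) :
    ∃ p : V → V, (∀ x ∈ M, p x = x) ∧ ∀ N, IsLobe A N → N ≠ M → ∀ x ∈ N, ∀ y ∈ N, p x = p y :=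
  (hM.exists_gate hconn).imp fun _ h => h.2

theorem IsLobe.exists_smul_ne (hA : PreservesArcs G A)
    (hprimG : PrimitiveOn (⊤ : Subgroup G) (Set.univ : Set V)) (hconn1 : ConnectivityOne A)
    (hΛ : IsLobe A Λ) (v : V) : ∃ g : G, v ∈ g • Λ ∧ g • Λ ≠ Λ := by
  have hvcut : IsCutVertex A v := by
    obtain ⟨v₀, hv₀⟩ := hconn1.2
    obtain ⟨g, -, rfl⟩ := hprimG.1 v₀ trivial v trivial
    exact hv₀.smul hA g
  obtain ⟨L, hL, hvL, hLΛ⟩ := hvcut.exists_isLobe_ne hconn1.1 Λ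
  obtain ⟨g, rfl⟩ := hΛ.exists_smul_eq hA hprimG hconn1.1 hL
  exact ⟨g, hvL, hLΛ⟩

section

variable (hA : PreservesArcs G A) (hprimG : PrimitiveOn (⊤ : Subgroup G) (Set.univ : Set V))
  (hconn : ConnOn A Set.univ) (hΛ : IsLobe A Λ) (hreg : RegularOn (stabilizer G Λ) Λ)
  (hprim : PrimitiveOn (stabilizer G Λ) Λ)
include hA hprimG hconn hΛ hreg hprim

theorem IsLobe.stepLabel_mul_stepLabel_of_isLobe (M : Set V) (hM : IsLobe A M) :
    ∀ x ∈ M, ∀ y ∈ M, ∀ z ∈ M, stepLabel G Λ x y * stepLabel G Λ y z = stepLabel G Λ x z := by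
  intro x hx y hy z hz
  obtain ⟨g, rfl⟩ := hΛ.exists_smul_eq hA hprimG hconn hM
  exact stepLabel_mul_stepLabel hA hΛ hreg hprim (g := g⁻¹)
    (Set.mem_smul_set_iff_inv_smul_mem.1 hx) (Set.mem_smul_set_iff_inv_smul_mem.1 hy)
    (Set.mem_smul_set_iff_inv_smul_mem.1 hz)

theorem IsLobe.hasTrivialWalk_eq_or_forall :
    (∀ x y, HasTrivialWalk (IsLobe A) (stepLabel G Λ) x y → x = y) ∨
      ∀ x y, HasTrivialWalk (IsLobe A) (stepLabel G Λ) x y := by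
  have hequiv := hasTrivialWalk_equivalence (exists_gate_of_isLobe hconn)
    (hΛ.stepLabel_mul_stepLabel_of_isLobe hA hprimG hconn hreg hprim)
  have hinv : ∀ g ∈ (⊤ : Subgroup G), ∀ x ∈ Set.univ, ∀ y ∈ Set.univ,
      HasTrivialWalk (IsLobe A) (stepLabel G Λ) x y →
        HasTrivialWalk (IsLobe A) (stepLabel G Λ) (g • x) (g • y) :=
    fun g _ x _ y _ h => h.map (g • ·) (fun a b ⟨M, hM, ha, hb⟩ => ⟨g • M, hM.smul hA g,
      Set.smul_mem_smul_set ha, Set.smul_mem_smul_set hb⟩) (stepLabel_smul hA hΛ hreg hprim g)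
  rcases hprimG.2 _ ⟨fun x _ => hequiv.refl x, fun _ _ _ _ => hequiv.symm,
    fun _ _ _ _ _ _ => hequiv.trans⟩ hinv with h | h
  · exact .inl fun x y => h x trivial y trivial
  · exact .inr fun x y => h x trivial y trivial

end

theorem IsLobe.not_regularOn_stabilizer (hA : PreservesArcs G A)
    (hprimG : PrimitiveOn (⊤ : Subgroup G) (Set.univ : Set V)) (hconn1 : ConnectivityOne A)
    (hΛ : IsLobe A Λ) (hprim : PrimitiveOn (stabilizer G Λ) Λ) :
    ¬ RegularOn (stabilizer G Λ) Λ := by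
  intro hreg
  have hgate := exists_gate_of_isLobe hconn1.1
  have hcocycle := hΛ.stepLabel_mul_stepLabel_of_isLobe hA hprimG hconn1.1 hreg hprim
  obtain ⟨u, hu, v, hv, huv⟩ := hΛ.1.1
  obtain ⟨g, hvg, hgΛ⟩ := hΛ.exists_smul_ne hA hprimG hconn1 v
  obtain ⟨t, ht, htvu⟩ := hprim.1 v hv u hu
  have hv' : g⁻¹ • v ∈ Λ := Set.mem_smul_set_iff_inv_smul_mem.1 hvg
  have htv : (t : G) • g⁻¹ • v ∈ Λ := by
    rw [← mem_stabilizer_iff.1 ht]; exact Set.smul_mem_smul_set hv'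
  -- `w ∈ g • Λ` is chosen so that the walk `u, v, w` has weight `1`
  set w := g • (t : G) • g⁻¹ • v
  have hw : w ∈ g • Λ := Set.smul_mem_smul_set htv
  have hvw : stepLabel G Λ v w = stepLabel G Λ v u := by
    rw [stepLabel_eq hA hΛ hreg hprim ⟨g⁻¹, ⟨t, ht⟩, hv', by simpa [w] using htv, by simp [w], rfl⟩,
      ← htvu, stepLabel_eq hA hΛ hreg hprim (isStepLabel_of_mem ⟨t, ht⟩ hv)]
  rcases hΛ.hasTrivialWalk_eq_or_forall hA hprimG hconn1.1 hreg hprim with htriv | huniv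
  · have huw : u = w := htriv u w ⟨[v, w],
      isChain_cons_cons.2 ⟨⟨Λ, hΛ, hu, hv⟩, isChain_pair.2 ⟨g • Λ, hΛ.smul hA g, hvg, hw⟩⟩, rfl,
      by simp only [walkWeight, mul_one, hvw, hcocycle Λ hΛ u hu v hv u hu,
        mul_eq_left.1 (hcocycle Λ hΛ u hu u hu u hu)]⟩
    exact huv (hΛ.inter_subsingleton (hΛ.smul hA g) (Ne.symm hgΛ) ⟨hu, huw ▸ hw⟩ ⟨hv, hvg⟩)
  · obtain ⟨s, hs, hsuv⟩ := hprim.1 u hu v hv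
    have h1 := (huniv u v).eq_one hgate hcocycle ⟨Λ, hΛ, hu, hv⟩
    rw [← hsuv, stepLabel_eq hA hΛ hreg hprim (isStepLabel_of_mem ⟨s, hs⟩ hu)] at h1
    have hsu : (s : G) • u = u := by
      simpa using congrArg (fun κ : Equiv.Perm Λ => (κ ⟨u, hu⟩ : V)) h1
    exact huv (hsu.symm.trans hsuv)

end NotRegular

theorem lobe_stabiliser_primitive_not_regular_general
    {V : Type*} {G : Type*} [Group G] [MulAction G V]
    (A : V → V → Prop)
    (hA : ∀ (g : G) (u v : V), A u v ↔ A (g • u) (g • v))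
    (hvprim : PrimitiveOn (⊤ : Subgroup G) (Set.univ : Set V))
    (hconn1 : ConnectivityOne A)
    (hthree : ∀ Λ' : Set V, IsLobe A Λ' →
      ∃ a b c : V, a ∈ Λ' ∧ b ∈ Λ' ∧ c ∈ Λ' ∧ a ≠ b ∧ a ≠ c ∧ b ≠ c)
    (Λ : Set V) (hΛ : IsLobe A Λ) :
    PrimitiveOn (MulAction.stabilizer G Λ) Λ ∧ ¬ RegularOn (MulAction.stabilizer G Λ) Λ := by
  have htrans := hΛ.transitiveOn_stabilizer hA hvprim hconn1.1 (hthree Λ hΛ)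
  have hprim := hΛ.primitiveOn_stabilizer hA hvprim hconn1.1 htrans
  exact ⟨hprim, hΛ.not_regularOn_stabilizer hA hvprim hconn1 hprim⟩

/-- Let `G` be a vertex-transitive, vertex-primitive group of
automorphisms of a connectivity-one digraph `Γ` (arc relation `A`) whose lobes all
have at least three vertices, and let `Λ` be a lobe of `Γ`. Then the setwise
stabiliser of `Λ` acts primitively and not regularly on the vertices of `Λ`. -/
theorem lobe_stabiliser_primitive_not_regular
    {V : Type*} {G : Type*} [Group G] [MulAction G V]
    (A : V → V → Prop)
    (hA : ∀ (g : G) (u v : V), A u v ↔ A (g • u) (g • v))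
    (hvtrans : TransitiveOn (⊤ : Subgroup G) (Set.univ : Set V))
    (hvprim : PrimitiveOn (⊤ : Subgroup G) (Set.univ : Set V))
    (hconn1 : ConnectivityOne A)
    (hthree : ∀ Λ' : Set V, IsLobe A Λ' →
      ∃ a b c : V, a ∈ Λ' ∧ b ∈ Λ' ∧ c ∈ Λ' ∧ a ≠ b ∧ a ≠ c ∧ b ≠ c)
    (Λ : Set V) (hΛ : IsLobe A Λ) :
    PrimitiveOn (MulAction.stabilizer G Λ) Λ ∧ ¬ RegularOn (MulAction.stabilizer G Λ) Λ :=
  lobe_stabiliser_primitive_not_regular_general A hA hvprim hconn1 hthree Λ hΛ
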